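/- Let J be an almost complex structure on ℝ^n and let a, b ∈ ℝ with b ≠ 0. Then the fiberwise multiplication Z(x,p) = (x, a·p + b·ᵗJ(x)p) is J̃-holomorphic for the Satô lift J̃: d_{(x,p)}Z ∘ J̃(x,p) = J̃(Z(x,p)) ∘ d_{(x,p)}Z for all (x,p) ∈ ℝ^n × ℝ^n. -/

import Mathlib

open Matrix BigOperators

noncomputable section

/-- Partial derivative `∂x_i f` at `x`. -/
def pd {n : ℕ} (f : (Fin n → ℝ) → ℝ) (i : Fin n) (x : Fin n → ℝ) : ℝ :=
  fderiv ℝ f x (Pi.single i 1)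

/-- Lower-left block of the Satô (complete) lift:
`B^i_j(x,p) = (1/2) p_k [∂x_j J^k_i − ∂x_i J^k_j + J^k_s J^q_i ∂x_q J^s_j − J^k_s J^q_j ∂x_q J^s_i]`. -/
def Bblock {n : ℕ} (J : (Fin n → ℝ) → Matrix (Fin n) (Fin n) ℝ) (x p : Fin n → ℝ) :
    Matrix (Fin n) (Fin n) ℝ :=
  Matrix.of fun i j =>
    (1 / 2) * ∑ k, p k *
      (pd (fun y => J y k i) j x - pd (fun y => J y k j) i x
        + (∑ s, ∑ q, J x k s * J x q i * pd (fun y => J y s j) q x)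
        - ∑ s, ∑ q, J x k s * J x q j * pd (fun y => J y s i) q x)

/-- The Satô (complete) lift `J̃(x,p)`, acting on tangent vectors `(X,P)` of
`T*ℝ^n = ℝ^n × ℝ^n` by `(X,P) ↦ (J X, B X + ᵗJ P)`. -/
def SatoMap {n : ℕ} (J : (Fin n → ℝ) → Matrix (Fin n) (Fin n) ℝ) (x p : Fin n → ℝ) :
    (Fin n → ℝ) × (Fin n → ℝ) → (Fin n → ℝ) × (Fin n → ℝ) :=
  fun v => ((J x).mulVec v.1, (Bblock J x p).mulVec v.1 + (J x)ᵀ.mulVec v.2)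

/-- Fiberwise multiplication by `a + ib`: `Z(x,p) = (x, a·p + b·ᵗJ(x) p)`. -/
def Zmul {n : ℕ} (J : (Fin n → ℝ) → Matrix (Fin n) (Fin n) ℝ) (a b : ℝ) :
    (Fin n → ℝ) × (Fin n → ℝ) → (Fin n → ℝ) × (Fin n → ℝ) :=
  fun w => (w.1, a • w.2 + b • (J w.1)ᵀ.mulVec w.2)

/-! ### Auxiliary lemmas -/

lemma fderiv_apply_eq_sum_pd {n : ℕ} (f : (Fin n → ℝ) → ℝ) (x X : Fin n → ℝ) :
    fderiv ℝ f x X = ∑ m, X m * pd f m x := by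
  have hX : X = ∑ m, X m • (Pi.single m 1 : Fin n → ℝ) := by
    funext j
    simp [Finset.sum_apply, Pi.single_apply, mul_ite]
  calc fderiv ℝ f x X = fderiv ℝ f x (∑ m, X m • (Pi.single m 1 : Fin n → ℝ)) := by rw [← hX]
    _ = ∑ m, X m * pd f m x := by
        rw [map_sum]
        exact Finset.sum_congr rfl fun m _ => by simp [pd]

lemma JJ_entry {n : ℕ} (J : (Fin n → ℝ) → Matrix (Fin n) (Fin n) ℝ)
    (hJ : ∀ x, J x * J x = -1) (x : Fin n → ℝ) (k j : Fin n) :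
    ∑ s, J x k s * J x s j = if k = j then (-1:ℝ) else 0 := by
  have h : (J x * J x) k j = (-1 : Matrix (Fin n) (Fin n) ℝ) k j := by rw [hJ x]
  simpa [Matrix.mul_apply, Matrix.neg_apply, Matrix.one_apply, apply_ite] using h

lemma pdJJ {n : ℕ} (J : (Fin n → ℝ) → Matrix (Fin n) (Fin n) ℝ)
    (hJsmooth : ∀ k j : Fin n, ContDiff ℝ (⊤ : ℕ∞) fun x => J x k j)
    (hJ : ∀ x, J x * J x = -1) (x : Fin n → ℝ) (l i q : Fin n) :
    ∑ m, (pd (fun y => J y l m) q x * J x m i + J x l m * pd (fun y => J y m i) q x) = 0 := by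
  have hder : HasFDerivAt (fun y => ∑ m, J y l m * J y m i)
      (∑ m, (J x l m • fderiv ℝ (fun y => J y m i) x + J x m i • fderiv ℝ (fun y => J y l m) x)) x :=
    HasFDerivAt.fun_sum fun m _ =>
      (((hJsmooth l m).differentiable (by simp) x).hasFDerivAt).fun_mul
        (((hJsmooth m i).differentiable (by simp) x).hasFDerivAt)
  have hconst : (fun y => ∑ m, J y l m * J y m i) = fun _ => (if l = i then (-1:ℝ) else 0) :=
    funext fun y => JJ_entry J hJ y l i
  rw [hconst] at hder
  have h0 : (∑ m, (J x l m • fderiv ℝ (fun y => J y m i) x + J x m i • fderiv ℝ (fun y => J y l m) x)) = 0 :=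
    hder.unique (hasFDerivAt_const _ _)
  have h2 := congrArg (fun (L : (Fin n → ℝ) →L[ℝ] ℝ) => L (Pi.single q 1)) h0
  simp only [ContinuousLinearMap.coe_sum', Finset.sum_apply, ContinuousLinearMap.add_apply,
    ContinuousLinearMap.coe_smul', Pi.smul_apply, smul_eq_mul, ContinuousLinearMap.zero_apply] at h2
  have h3 : ∑ m, (pd (fun y => J y l m) q x * J x m i + J x l m * pd (fun y => J y m i) q x)
      = ∑ m, (J x l m * fderiv ℝ (fun y => J y m i) x (Pi.single q 1)
          + J x m i * fderiv ℝ (fun y => J y l m) x (Pi.single q 1)) :=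
    Finset.sum_congr rfl fun m _ => by simp [pd]; ring
  rw [h3, h2]

lemma sum_triple_reorder {n : ℕ} (f : Fin n → Fin n → Fin n → ℝ) :
    ∑ m, ∑ s, ∑ q, f m s q = ∑ s, ∑ q, ∑ m, f m s q := by
  rw [Finset.sum_comm]
  exact Finset.sum_congr rfl fun s _ => Finset.sum_comm

lemma key_alg {n : ℕ} (A : Matrix (Fin n) (Fin n) ℝ) (D : Fin n → Fin n → Fin n → ℝ)
    (p : Fin n → ℝ)
    (hA : ∀ k j, ∑ s, A k s * A s j = if k = j then (-1:ℝ) else 0)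
    (hD : ∀ l i q, ∑ m, (D l m q * A m i + A l m * D m i q) = 0) (i j : Fin n) :
    (∑ m, A m i * ((1/2) * ∑ k, p k * (D k m j - D k j m
        + (∑ s, ∑ q, A k s * A q m * D s j q) - ∑ s, ∑ q, A k s * A q j * D s m q)))
      + ∑ m, (∑ k, p k * D k i m) * A m j
    = ((1/2) * ∑ k, (∑ l, A l k * p l) * (D k i j - D k j i
        + (∑ s, ∑ q, A k s * A q i * D s j q) - ∑ s, ∑ q, A k s * A q j * D s i q))
      + ∑ m, A m i * ∑ k, p k * D k m j := by
  have hD' : ∀ l i q, ∑ m, D l m q * A m i = -∑ m, A l m * D m i q := by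
    intro l i q
    have h := hD l i q
    rw [Finset.sum_add_distrib] at h
    linarith
  -- L3
  have hL3 : ∀ k, (∑ m, A m i * (∑ s, ∑ q, A k s * A q m * D s j q)) = -∑ m, A k m * D m j i := by
    intro k
    calc ∑ m, A m i * (∑ s, ∑ q, A k s * A q m * D s j q)
        = ∑ m, ∑ s, ∑ q, A m i * (A k s * A q m * D s j q) := by simp only [Finset.mul_sum]
      _ = ∑ s, ∑ q, ∑ m, A m i * (A k s * A q m * D s j q) := sum_triple_reorder _
      _ = ∑ s, ∑ q, (A k s * D s j q) * ∑ m, A q m * A m i := by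
          refine Finset.sum_congr rfl fun s _ => Finset.sum_congr rfl fun q _ => ?_
          rw [Finset.mul_sum]
          exact Finset.sum_congr rfl fun m _ => by ring
      _ = ∑ s, ∑ q, (A k s * D s j q) * (if q = i then (-1:ℝ) else 0) := by
          refine Finset.sum_congr rfl fun s _ => Finset.sum_congr rfl fun q _ => by rw [hA]
      _ = -∑ m, A k m * D m j i := by
          simp [mul_ite, mul_zero, Finset.sum_ite_eq', ← Finset.sum_neg_distrib]
  -- L4
  have hL4 : ∀ k, ∑ m, A m i * (∑ s, ∑ q, A k s * A q j * D s m q) = ∑ m, A m j * D k i m := by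
    intro k
    calc ∑ m, A m i * (∑ s, ∑ q, A k s * A q j * D s m q)
        = ∑ m, ∑ s, ∑ q, A m i * (A k s * A q j * D s m q) := by simp only [Finset.mul_sum]
      _ = ∑ s, ∑ q, ∑ m, A m i * (A k s * A q j * D s m q) := sum_triple_reorder _
      _ = ∑ s, ∑ q, (A k s * A q j) * ∑ m, D s m q * A m i := by
          refine Finset.sum_congr rfl fun s _ => Finset.sum_congr rfl fun q _ => ?_
          rw [Finset.mul_sum]
          exact Finset.sum_congr rfl fun m _ => by ring
      _ = ∑ s, ∑ q, (A k s * A q j) * (-∑ m, A s m * D m i q) := by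
          refine Finset.sum_congr rfl fun s _ => Finset.sum_congr rfl fun q _ => by rw [hD']
      _ = -∑ s, ∑ q, ∑ m, (A k s * A s m) * (A q j * D m i q) := by
          rw [← Finset.sum_neg_distrib]
          refine Finset.sum_congr rfl fun s _ => ?_
          rw [← Finset.sum_neg_distrib]
          refine Finset.sum_congr rfl fun q _ => ?_
          rw [mul_neg, neg_inj, Finset.mul_sum]
          exact Finset.sum_congr rfl fun m _ => by ring
      _ = -∑ q, ∑ m, ∑ s, (A k s * A s m) * (A q j * D m i q) := by rw [sum_triple_reorder]
      _ = -∑ q, ∑ m, (if k = m then (-1:ℝ) else 0) * (A q j * D m i q) := by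
          refine congrArg Neg.neg (Finset.sum_congr rfl fun q _ => Finset.sum_congr rfl fun m _ => ?_)
          rw [← Finset.sum_mul, hA]
      _ = ∑ m, A m j * D k i m := by
          simp [ite_mul, zero_mul, Finset.sum_ite_eq, ← Finset.sum_neg_distrib, mul_comm]
  -- R3/R4 pattern
  have hR : ∀ l r t, ∑ k, A l k * (∑ s, ∑ q, A k s * A q r * D s t q) = -∑ m, A m r * D l t m := by
    intro l r t
    calc ∑ k, A l k * (∑ s, ∑ q, A k s * A q r * D s t q)
        = ∑ k, ∑ s, ∑ q, A l k * (A k s * A q r * D s t q) := by simp only [Finset.mul_sum]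
      _ = ∑ s, ∑ q, ∑ k, A l k * (A k s * A q r * D s t q) := sum_triple_reorder _
      _ = ∑ q, ∑ s, ∑ k, A l k * (A k s * A q r * D s t q) := Finset.sum_comm
      _ = ∑ q, ∑ s, (if l = s then (-1:ℝ) else 0) * (A q r * D s t q) := by
          refine Finset.sum_congr rfl fun q _ => Finset.sum_congr rfl fun s _ => ?_
          rw [← hA l s, Finset.sum_mul]
          exact Finset.sum_congr rfl fun k _ => by ring
      _ = -∑ m, A m r * D l t m := by
          simp [ite_mul, zero_mul, Finset.sum_ite_eq, ← Finset.sum_neg_distrib]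
  have hX15 : (∑ k, p k * ∑ m, A m i * D k m j) + (∑ k, p k * ∑ m, A k m * D m i j) = 0 := by
    rw [← Finset.sum_add_distrib]
    refine Finset.sum_eq_zero fun k _ => ?_
    have h1 : p k * ∑ m, A m i * D k m j + p k * ∑ m, A k m * D m i j
        = p k * ∑ m, (D k m j * A m i + A k m * D m i j) := by
      rw [Finset.mul_sum, Finset.mul_sum, Finset.mul_sum, ← Finset.sum_add_distrib]
      exact Finset.sum_congr rfl fun m _ => by ring
    rw [h1, hD k i j, mul_zero]
  have hLmain : ∑ m, A m i * ((1/2) * ∑ k, p k * (D k m j - D k j m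
        + (∑ s, ∑ q, A k s * A q m * D s j q) - ∑ s, ∑ q, A k s * A q j * D s m q))
      = (1/2) * ∑ k, p k * ((∑ m, A m i * D k m j) - (∑ m, A m i * D k j m)
          - (∑ m, A k m * D m j i) - (∑ m, A m j * D k i m)) := by
    calc ∑ m, A m i * ((1/2) * ∑ k, p k * (D k m j - D k j m
        + (∑ s, ∑ q, A k s * A q m * D s j q) - ∑ s, ∑ q, A k s * A q j * D s m q))
        = ∑ m, ∑ k, A m i * ((1/2) * (p k * (D k m j - D k j m
            + (∑ s, ∑ q, A k s * A q m * D s j q) - ∑ s, ∑ q, A k s * A q j * D s m q))) := by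
          simp only [Finset.mul_sum]
      _ = ∑ k, ∑ m, A m i * ((1/2) * (p k * (D k m j - D k j m
            + (∑ s, ∑ q, A k s * A q m * D s j q) - ∑ s, ∑ q, A k s * A q j * D s m q))) :=
          Finset.sum_comm
      _ = (1/2) * ∑ k, p k * ((∑ m, A m i * D k m j) - (∑ m, A m i * D k j m)
          - (∑ m, A k m * D m j i) - (∑ m, A m j * D k i m)) := by
          rw [Finset.mul_sum]
          refine Finset.sum_congr rfl fun k _ => ?_
          have e : ∑ m, A m i * ((1/2) * (p k * (D k m j - D k j m
              + (∑ s, ∑ q, A k s * A q m * D s j q) - ∑ s, ∑ q, A k s * A q j * D s m q)))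
              = (1/2) * (p k * ∑ m, A m i * (D k m j - D k j m
              + (∑ s, ∑ q, A k s * A q m * D s j q) - ∑ s, ∑ q, A k s * A q j * D s m q)) := by
            rw [Finset.mul_sum, Finset.mul_sum]
            exact Finset.sum_congr rfl fun m _ => by ring
          rw [e]
          have e2 : ∑ m, A m i * (D k m j - D k j m
              + (∑ s, ∑ q, A k s * A q m * D s j q) - ∑ s, ∑ q, A k s * A q j * D s m q)
              = (∑ m, A m i * D k m j) - (∑ m, A m i * D k j m)
                + (∑ m, A m i * (∑ s, ∑ q, A k s * A q m * D s j q))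
                - (∑ m, A m i * (∑ s, ∑ q, A k s * A q j * D s m q)) := by
            simp only [mul_sub, mul_add, Finset.sum_sub_distrib, Finset.sum_add_distrib]
          rw [e2, hL3 k, hL4 k]
          ring
  have hRmain : (1/2) * ∑ k, (∑ l, A l k * p l) * (D k i j - D k j i
        + (∑ s, ∑ q, A k s * A q i * D s j q) - ∑ s, ∑ q, A k s * A q j * D s i q)
      = (1/2) * ∑ l, p l * ((∑ m, A l m * D m i j) - (∑ m, A l m * D m j i)
          - (∑ m, A m i * D l j m) + (∑ m, A m j * D l i m)) := by
    congr 1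
    calc ∑ k, (∑ l, A l k * p l) * (D k i j - D k j i
        + (∑ s, ∑ q, A k s * A q i * D s j q) - ∑ s, ∑ q, A k s * A q j * D s i q)
        = ∑ k, ∑ l, (A l k * p l) * (D k i j - D k j i
        + (∑ s, ∑ q, A k s * A q i * D s j q) - ∑ s, ∑ q, A k s * A q j * D s i q) := by
          simp only [Finset.sum_mul]
      _ = ∑ l, ∑ k, (A l k * p l) * (D k i j - D k j i
        + (∑ s, ∑ q, A k s * A q i * D s j q) - ∑ s, ∑ q, A k s * A q j * D s i q) :=
          Finset.sum_comm
      _ = ∑ l, p l * ((∑ m, A l m * D m i j) - (∑ m, A l m * D m j i)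
          - (∑ m, A m i * D l j m) + (∑ m, A m j * D l i m)) := by
          refine Finset.sum_congr rfl fun l _ => ?_
          have e : ∑ k, (A l k * p l) * (D k i j - D k j i
              + (∑ s, ∑ q, A k s * A q i * D s j q) - ∑ s, ∑ q, A k s * A q j * D s i q)
              = p l * ∑ k, A l k * (D k i j - D k j i
              + (∑ s, ∑ q, A k s * A q i * D s j q) - ∑ s, ∑ q, A k s * A q j * D s i q) := by
            rw [Finset.mul_sum]
            exact Finset.sum_congr rfl fun k _ => by ring
          rw [e]
          have e2 : ∑ k, A l k * (D k i j - D k j i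
              + (∑ s, ∑ q, A k s * A q i * D s j q) - ∑ s, ∑ q, A k s * A q j * D s i q)
              = (∑ k, A l k * D k i j) - (∑ k, A l k * D k j i)
                + (∑ k, A l k * (∑ s, ∑ q, A k s * A q i * D s j q))
                - (∑ k, A l k * (∑ s, ∑ q, A k s * A q j * D s i q)) := by
            simp only [mul_sub, mul_add, Finset.sum_sub_distrib, Finset.sum_add_distrib]
          rw [e2, hR l i j, hR l j i]
          ring
  have hT2 : ∑ m, (∑ k, p k * D k i m) * A m j = ∑ k, p k * ∑ m, A m j * D k i m := by
    calc ∑ m, (∑ k, p k * D k i m) * A m j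
        = ∑ m, ∑ k, (p k * D k i m) * A m j := by simp only [Finset.sum_mul]
      _ = ∑ k, ∑ m, (p k * D k i m) * A m j := Finset.sum_comm
      _ = ∑ k, p k * ∑ m, A m j * D k i m := by
          refine Finset.sum_congr rfl fun k _ => ?_
          rw [Finset.mul_sum]
          exact Finset.sum_congr rfl fun m _ => by ring
  have hT1 : ∑ m, A m i * ∑ k, p k * D k m j = ∑ k, p k * ∑ m, A m i * D k m j := by
    calc ∑ m, A m i * ∑ k, p k * D k m j
        = ∑ m, ∑ k, A m i * (p k * D k m j) := by simp only [Finset.mul_sum]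
      _ = ∑ k, ∑ m, A m i * (p k * D k m j) := Finset.sum_comm
      _ = ∑ k, p k * ∑ m, A m i * D k m j := by
          refine Finset.sum_congr rfl fun k _ => ?_
          rw [Finset.mul_sum]
          exact Finset.sum_congr rfl fun m _ => by ring
  rw [hLmain, hRmain, hT2, hT1]
  simp only [mul_sub, mul_add, Finset.sum_sub_distrib, Finset.sum_add_distrib] at hX15 ⊢
  linarith [hX15]

def Cmat {n : ℕ} (J : (Fin n → ℝ) → Matrix (Fin n) (Fin n) ℝ) (x p : Fin n → ℝ) :
    Matrix (Fin n) (Fin n) ℝ :=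
  Matrix.of fun i m => ∑ k, p k * pd (fun y => J y k i) m x

lemma Bblock_linear {n : ℕ} (J : (Fin n → ℝ) → Matrix (Fin n) (Fin n) ℝ)
    (x : Fin n → ℝ) (a b : ℝ) (p r : Fin n → ℝ) :
    Bblock J x (a • p + b • r) = a • Bblock J x p + b • Bblock J x r := by
  ext i j
  simp only [Bblock, Matrix.of_apply, Matrix.add_apply, Matrix.smul_apply, Pi.add_apply,
    Pi.smul_apply, smul_eq_mul, Finset.mul_sum]
  rw [← Finset.sum_add_distrib]
  exact Finset.sum_congr rfl fun k _ => by ring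

lemma key_matrix {n : ℕ} (J : (Fin n → ℝ) → Matrix (Fin n) (Fin n) ℝ)
    (hJsmooth : ∀ k j : Fin n, ContDiff ℝ (⊤ : ℕ∞) fun x => J x k j)
    (hJ : ∀ x, J x * J x = -1) (x p : Fin n → ℝ) :
    (J x)ᵀ * Bblock J x p + Cmat J x p * J x
      = Bblock J x ((J x)ᵀ.mulVec p) + (J x)ᵀ * Cmat J x p := by
  ext i j
  have h := key_alg (J x) (fun k i m => pd (fun y => J y k i) m x) p
    (JJ_entry J hJ x) (pdJJ J hJsmooth hJ x) i j
  simp only [Matrix.add_apply, Matrix.mul_apply, Matrix.transpose_apply, Bblock, Cmat,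
    Matrix.of_apply, Matrix.mulVec, dotProduct]
  exact h

def LZmap {n : ℕ} (J : (Fin n → ℝ) → Matrix (Fin n) (Fin n) ℝ) (a b : ℝ) (x p : Fin n → ℝ) :
    ((Fin n → ℝ) × (Fin n → ℝ)) →L[ℝ] ((Fin n → ℝ) × (Fin n → ℝ)) :=
  (ContinuousLinearMap.fst ℝ (Fin n → ℝ) (Fin n → ℝ)).prod
    (ContinuousLinearMap.pi fun i =>
      a • (ContinuousLinearMap.proj i).comp (ContinuousLinearMap.snd ℝ (Fin n → ℝ) (Fin n → ℝ)) +
      b • ∑ k, (J x k i • (ContinuousLinearMap.proj k).comp (ContinuousLinearMap.snd ℝ (Fin n → ℝ) (Fin n → ℝ)) +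
        p k • (fderiv ℝ (fun y => J y k i) x).comp (ContinuousLinearMap.fst ℝ (Fin n → ℝ) (Fin n → ℝ))))

lemma hasFDerivAt_Zmul {n : ℕ} (J : (Fin n → ℝ) → Matrix (Fin n) (Fin n) ℝ)
    (hJsmooth : ∀ k j : Fin n, ContDiff ℝ (⊤ : ℕ∞) fun x => J x k j)
    (a b : ℝ) (x p : Fin n → ℝ) :
    HasFDerivAt (Zmul J a b) (LZmap J a b x p) (x, p) := by
  have hZ : Zmul J a b = fun w : (Fin n → ℝ) × (Fin n → ℝ) =>
      (w.1, fun i => a * w.2 i + b * ∑ k, J w.1 k i * w.2 k) := by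
    funext w
    refine Prod.ext rfl ?_
    funext i
    simp [Zmul, Matrix.mulVec, Matrix.transpose_apply, dotProduct]
  rw [hZ]
  refine HasFDerivAt.prodMk ?_ ?_
  · exact hasFDerivAt_fst
  · refine (hasFDerivAt_pi (φ := fun i (w : (Fin n → ℝ) × (Fin n → ℝ)) =>
      a * w.2 i + b * ∑ k, J w.1 k i * w.2 k)).2 fun i => ?_
    refine HasFDerivAt.add ?_ ?_
    · exact (((ContinuousLinearMap.proj i).comp
        (ContinuousLinearMap.snd ℝ (Fin n → ℝ) (Fin n → ℝ))).hasFDerivAt).const_mul a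
    · refine HasFDerivAt.const_mul ?_ b
      refine HasFDerivAt.fun_sum fun k _ => ?_
      have hj : HasFDerivAt (fun w : (Fin n → ℝ) × (Fin n → ℝ) => J w.1 k i)
          ((fderiv ℝ (fun y => J y k i) x).comp (ContinuousLinearMap.fst ℝ (Fin n → ℝ) (Fin n → ℝ)))
          (x, p) :=
        HasFDerivAt.comp (x, p) (g := fun y => J y k i) (f := Prod.fst)
          (((hJsmooth k i).differentiable (by simp)) x).hasFDerivAt hasFDerivAt_fst
      exact hj.fun_mul ((ContinuousLinearMap.proj k).comp
        (ContinuousLinearMap.snd ℝ (Fin n → ℝ) (Fin n → ℝ))).hasFDerivAt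

lemma LZmap_apply {n : ℕ} (J : (Fin n → ℝ) → Matrix (Fin n) (Fin n) ℝ) (a b : ℝ)
    (x p : Fin n → ℝ) (w : (Fin n → ℝ) × (Fin n → ℝ)) :
    LZmap J a b x p w = (w.1, a • w.2 + b • ((J x)ᵀ.mulVec w.2 + (Cmat J x p).mulVec w.1)) := by
  refine Prod.ext rfl ?_
  funext i
  simp only [LZmap, ContinuousLinearMap.prod_apply, ContinuousLinearMap.pi_apply,
    ContinuousLinearMap.add_apply, ContinuousLinearMap.coe_smul', Pi.smul_apply,
    ContinuousLinearMap.coe_sum', Finset.sum_apply, ContinuousLinearMap.coe_comp',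
    Function.comp_apply, ContinuousLinearMap.proj_apply, ContinuousLinearMap.coe_snd',
    ContinuousLinearMap.coe_fst', smul_eq_mul, Pi.add_apply, Matrix.mulVec, dotProduct,
    Matrix.transpose_apply, Cmat, Matrix.of_apply]
  congr 1
  rw [Finset.sum_add_distrib]
  congr 2
  calc ∑ k, p k * fderiv ℝ (fun y => J y k i) x w.1
      = ∑ k, p k * ∑ m, w.1 m * pd (fun y => J y k i) m x :=
        Finset.sum_congr rfl fun k _ => by rw [fderiv_apply_eq_sum_pd]
    _ = ∑ k, ∑ m, p k * (w.1 m * pd (fun y => J y k i) m x) := by simp only [Finset.mul_sum]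
    _ = ∑ m, ∑ k, p k * (w.1 m * pd (fun y => J y k i) m x) := Finset.sum_comm
    _ = ∑ m, (∑ k, p k * pd (fun y => J y k i) m x) * w.1 m := by
        refine Finset.sum_congr rfl fun m _ => ?_
        rw [Finset.sum_mul]
        exact Finset.sum_congr rfl fun k _ => by ring

/-- the fiberwise multiplication `Z` is `J̃`-holomorphic for the Satô
lift `J̃`. -/
theorem statement16 (n : ℕ)
    (J : (Fin n → ℝ) → Matrix (Fin n) (Fin n) ℝ)
    (hJsmooth : ∀ k j : Fin n, ContDiff ℝ (⊤ : ℕ∞) fun x => J x k j)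
    (hJ : ∀ x, J x * J x = -1)
    (a b : ℝ) (hb : b ≠ 0) :
    ∀ (x p : Fin n → ℝ) (v : (Fin n → ℝ) × (Fin n → ℝ)),
      fderiv ℝ (Zmul J a b) (x, p) (SatoMap J x p v) =
        SatoMap J (Zmul J a b (x, p)).1 (Zmul J a b (x, p)).2
          (fderiv ℝ (Zmul J a b) (x, p) v) := by
  intro x p v
  rw [(hasFDerivAt_Zmul J hJsmooth a b x p).fderiv]
  rw [LZmap_apply, LZmap_apply]
  simp only [SatoMap, Zmul]
  refine Prod.ext rfl ?_
  show a • (Bblock J x p *ᵥ v.1 + (J x)ᵀ *ᵥ v.2) +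
          b • ((J x)ᵀ *ᵥ (Bblock J x p *ᵥ v.1 + (J x)ᵀ *ᵥ v.2) + Cmat J x p *ᵥ J x *ᵥ v.1) =
    Bblock J x (a • p + b • (J x)ᵀ *ᵥ p) *ᵥ v.1 + (J x)ᵀ *ᵥ (a • v.2 + b • ((J x)ᵀ *ᵥ v.2 + Cmat J x p *ᵥ v.1))
  have hBQ : Bblock J x ((J x)ᵀ.mulVec p)
      = (J x)ᵀ * Bblock J x p + Cmat J x p * J x - (J x)ᵀ * Cmat J x p :=
    eq_sub_of_add_eq (key_matrix J hJsmooth hJ x p).symm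
  rw [Bblock_linear, hBQ]
  simp only [Matrix.mulVec_add, Matrix.mulVec_smul, Matrix.add_mulVec, Matrix.sub_mulVec,
    Matrix.smul_mulVec, Matrix.mulVec_mulVec, smul_add, smul_sub]
  module
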